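/- arXiv:1909.00682 — 4 statements merged into one kernel-verified Lean document; each statement's English description precedes it below -/
import Mathlib

section
/- Let δ ∈ (0,1) and α₁, α₄, α₅, α₆ ∈ ℝ satisfy α₄ > 0 and α₄ − |α₁| − |α₅| − |α₆| − 1/(1−δ) > 0. Then there exists δ' > 0 such that for every pair of vectors n, m ∈ ℝ³ with |n| ≤ 1 and every symmetric traceless matrix D ∈ ℝ^{3×3} one has α₄|D|² + α₁(n·Dn)² + 2(m·Dn) + (α₅+α₆)|Dn|² + |m|² ≥ δ'(|Dn|² + |m|²). -/
/-
The cross term is absorbed by Young's inequality, `2 m·Dn ≥ -(1-δ)|m|² - |Dn|²/(1-δ)`, which leaves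
`δ|m|²`. The remaining terms are bounded below by multiples of `|Dn|²` using `|n| ≤ 1`:
`(n·Dn)² ≤ |Dn|² ≤ |D|²` by Cauchy–Schwarz, so the coefficient of `|Dn|²` is at least the
positive number `α₄ - |α₁| - |α₅| - |α₆| - 1/(1-δ)`.
-/

noncomputable section
open MeasureTheory Real

/-- Vectors in `ℝ³`. -/
abbrev V3 : Type := Fin 3 → ℝ
/-- Real `3 × 3` matrices. -/
abbrev M3 : Type := Matrix (Fin 3) (Fin 3) ℝ

/-- The periodicity cell `Q = [-π, π]³`. -/
def Q3 : Set V3 := Set.Icc (fun _ => -Real.pi) (fun _ => Real.pi)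

/-- Euclidean inner product on `ℝ³`. -/
def dot (a b : V3) : ℝ := ∑ i, a i * b i

/-- Frobenius inner product `A : B = ∑_{i,j} A_{ij} B_{ij}`. -/
def mdot (A B : M3) : ℝ := ∑ i, ∑ j, A i j * B i j

/-- Tensor product `(a ⊗ b)_{ij} = a_i b_j`. -/
def outer (a b : V3) : M3 := Matrix.of fun i j => a i * b j

/-- Matrix-vector product. -/
def mv (A : M3) (x : V3) : V3 := A.mulVec x

/-- Partial derivative `∂_i f` of a scalar field. -/
def pd (i : Fin 3) (f : V3 → ℝ) (x : V3) : ℝ := fderiv ℝ f x (Pi.single i 1)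

/-- Spatial gradient of a scalar field. -/
def grad (f : V3 → ℝ) (x : V3) : V3 := fun i => pd i f x

/-- Divergence of a vector field. -/
def divg (w : V3 → V3) (x : V3) : ℝ := ∑ i, pd i (fun y => w y i) x

/-- Divergence of a matrix field, `(div A)_i = ∑_j ∂_j A_{ij}`. -/
def divM (A : V3 → M3) (x : V3) : V3 := fun i => ∑ j, pd j (fun y => A y i j) x

/-- Laplacian of a scalar field. -/
def lap (f : V3 → ℝ) (x : V3) : ℝ := ∑ i, pd i (fun y => pd i f y) x

/-- Componentwise Laplacian of a vector field. -/
def lapV (w : V3 → V3) (x : V3) : V3 := fun k => lap (fun y => w y k) x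

/-- Gradient matrix `(∇w)_{ij} = ∂_j w_i`. -/
def gradM (w : V3 → V3) (x : V3) : M3 := Matrix.of fun i j => pd j (fun y => w y i) x

/-- Symmetric part `D(v) = ½(∇v + ∇vᵀ)` of the velocity gradient. -/
def Dv (w : V3 → V3) (x : V3) : M3 := (1/2 : ℝ) • (gradM w x + (gradM w x).transpose)

/-- Antisymmetric part `Ω(v) = ½(∇v − ∇vᵀ)` of the velocity gradient. -/
def Ov (w : V3 → V3) (x : V3) : M3 := (1/2 : ℝ) • (gradM w x - (gradM w x).transpose)

/-- `(∇n ⊙ ∇n)_{ij} = ∑_k ∂_i n_k ∂_j n_k`. -/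
def odotM (w : V3 → V3) (x : V3) : M3 :=
  Matrix.of fun i j => ∑ k, pd i (fun y => w y k) x * pd j (fun y => w y k) x

/-- `|∇w|² = ∑_{i,k} (∂_i w_k)²`. -/
def gnorm2 (w : V3 → V3) (x : V3) : ℝ := ∑ i, ∑ k, (pd i (fun y => w y k) x)^2

/-- `2π`-periodicity in the space variables. -/
def Per {α : Type*} (f : V3 → α) : Prop :=
  ∀ (x : V3) (i : Fin 3), f (x + Pi.single i (2 * Real.pi)) = f x

/-- The dielectric matrix `Id + ε n ⊗ n`. -/
def matA (ε : ℝ) (n : V3) : M3 := 1 + ε • outer n n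

/-- The singular configuration potential `F(r) = (1 − r) log(1 − r)`. -/
def Fpot (r : ℝ) : ℝ := (1 - r) * Real.log (1 - r)

/-- Its derivative `F'(r) = −log(1 − r) − 1`. -/
def Fpot' (r : ℝ) : ℝ := -Real.log (1 - r) - 1

/-- The corotational (Lie) derivative `n̊ = ∂_t n + v·∇n − Ω(v) n`. -/
def ringD (v n : V3 → ℝ → V3) (x : V3) (t : ℝ) : V3 :=
  (fun k => deriv (fun s => n x s k) t)
    + (fun k => dot (v x t) (grad (fun y => n y t k) x))
    - mv (Ov (fun y => v y t) x) (n x t)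


lemma dot_self_eq_sum_sq (v : V3) : dot v v = ∑ i, v i ^ 2 :=
  Finset.sum_congr rfl fun i _ => (sq (v i)).symm

lemma dot_self_nonneg (v : V3) : 0 ≤ dot v v :=
  Finset.sum_nonneg fun i _ => mul_self_nonneg (v i)

lemma mdot_self_nonneg (D : M3) : 0 ≤ mdot D D :=
  Finset.sum_nonneg fun i _ => dot_self_nonneg (D i)

lemma sq_dot_le_dot_self_mul_dot_self (a b : V3) : dot a b ^ 2 ≤ dot a a * dot b b := by
  rw [dot_self_eq_sum_sq, dot_self_eq_sum_sq]
  exact Finset.sum_mul_sq_le_sq_mul_sq _ _ _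

lemma dot_mv_self_le_mdot_mul_dot (D : M3) (n : V3) :
    dot (mv D n) (mv D n) ≤ mdot D D * dot n n := by
  rw [dot_self_eq_sum_sq]
  calc ∑ i, mv D n i ^ 2 ≤ ∑ i, dot (D i) (D i) * dot n n :=
        Finset.sum_le_sum fun i _ => sq_dot_le_dot_self_mul_dot_self (D i) n
    _ = mdot D D * dot n n := (Finset.sum_mul ..).symm

lemma neg_le_two_mul_dot (m x : V3) {t : ℝ} (ht : 0 < t) :
    -(t * dot m m + 1 / t * dot x x) ≤ 2 * dot m x := by
  have hsq : 0 ≤ dot (t • m + x) (t • m + x) := dot_self_nonneg _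
  have hexp : dot (t • m + x) (t • m + x) = t * (t * dot m m + 2 * dot m x + 1 / t * dot x x) := by
    simp only [dot, Pi.add_apply, Pi.smul_apply, smul_eq_mul, Finset.mul_sum,
      ← Finset.sum_add_distrib]
    refine Finset.sum_congr rfl fun i _ => ?_
    field_simp
    ring
  linarith [(mul_nonneg_iff_of_pos_left ht).mp (hexp ▸ hsq)]

lemma dissipation_ge {δ : ℝ} (hδ : δ < 1) {α₁ α₄ α₅ α₆ : ℝ} (hα₄ : 0 ≤ α₄) (n m : V3) (D : M3)
    (hn : dot n n ≤ 1) :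
    (α₄ - |α₁| - |α₅| - |α₆| - 1 / (1 - δ)) * dot (mv D n) (mv D n) + δ * dot m m
      ≤ α₄ * mdot D D + α₁ * (dot n (mv D n))^2 + 2 * dot m (mv D n)
        + (α₅ + α₆) * dot (mv D n) (mv D n) + dot m m := by
  set Dn := mv D n
  have hDn : 0 ≤ dot Dn Dn := dot_self_nonneg Dn
  have hDn_le : dot Dn Dn ≤ mdot D D :=
    (dot_mv_self_le_mdot_mul_dot D n).trans (mul_le_of_le_one_right (mdot_self_nonneg D) hn)
  have hnDn_le : dot n Dn ^ 2 ≤ dot Dn Dn :=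
    (sq_dot_le_dot_self_mul_dot_self n Dn).trans (mul_le_of_le_one_left hDn hn)
  have hα₄_term : α₄ * dot Dn Dn ≤ α₄ * mdot D D := mul_le_mul_of_nonneg_left hDn_le hα₄
  have hα₁_term : -|α₁| * dot Dn Dn ≤ α₁ * dot n Dn ^ 2 := by
    nlinarith [neg_abs_le α₁, abs_nonneg α₁, sq_nonneg (dot n Dn)]
  have hα₅₆_term : -(|α₅| + |α₆|) * dot Dn Dn ≤ (α₅ + α₆) * dot Dn Dn :=
    mul_le_mul_of_nonneg_right (by linarith [abs_add_le α₅ α₆, neg_abs_le (α₅ + α₆)]) hDn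
  linarith [neg_le_two_mul_dot m Dn (sub_pos.mpr hδ)]

theorem stmt0_general (δ α₁ α₄ α₅ α₆ : ℝ) (hδ : δ ∈ Set.Ioo (0:ℝ) 1)
    (hcoef : 0 < α₄ - |α₁| - |α₅| - |α₆| - 1 / (1 - δ)) :
    ∃ δ' > (0:ℝ), ∀ (n m : V3) (D : M3),
      dot n n ≤ 1 → D.IsSymm → Matrix.trace D = 0 →
      δ' * (dot (mv D n) (mv D n) + dot m m)
        ≤ α₄ * mdot D D + α₁ * (dot n (mv D n))^2 + 2 * dot m (mv D n)
          + (α₅ + α₆) * dot (mv D n) (mv D n) + dot m m := by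
  obtain ⟨hδ0, hδ1⟩ := hδ
  set c := α₄ - |α₁| - |α₅| - |α₆| - 1 / (1 - δ)
  have hα₄ : 0 ≤ α₄ := by
    have : 0 < 1 / (1 - δ) := by have := sub_pos.mpr hδ1; positivity
    linarith [abs_nonneg α₁, abs_nonneg α₅, abs_nonneg α₆]
  refine ⟨min c δ, lt_min hcoef hδ0, fun n m D hn _ _ => ?_⟩
  calc min c δ * (dot (mv D n) (mv D n) + dot m m)
      ≤ c * dot (mv D n) (mv D n) + δ * dot m m := by
        rw [mul_add]
        exact add_le_add (mul_le_mul_of_nonneg_right (min_le_left c δ) (dot_self_nonneg _))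
          (mul_le_mul_of_nonneg_right (min_le_right c δ) (dot_self_nonneg _))
    _ ≤ _ := dissipation_ge hδ1 hα₄ n m D hn

/-- Lemma 3.2 in the paper: positivity of the dissipation.
If `δ ∈ (0,1)`, `α₄ > 0` and `α₄ − |α₁| − |α₅| − |α₆| − 1/(1−δ) > 0`, there is `δ' > 0`
such that for all `n, m ∈ ℝ³` with `|n| ≤ 1` and every symmetric traceless `D`,
`α₄|D|² + α₁(n·Dn)² + 2(m·Dn) + (α₅+α₆)|Dn|² + |m|² ≥ δ'(|Dn|² + |m|²)`. -/
theorem stmt0 (δ α₁ α₄ α₅ α₆ : ℝ) (hδ : δ ∈ Set.Ioo (0:ℝ) 1)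
    (hα₄ : 0 < α₄)
    (hcoef : 0 < α₄ - |α₁| - |α₅| - |α₆| - 1 / (1 - δ)) :
    ∃ δ' > (0:ℝ), ∀ (n m : V3) (D : M3),
      dot n n ≤ 1 → D.IsSymm → Matrix.trace D = 0 →
      δ' * (dot (mv D n) (mv D n) + dot m m)
        ≤ α₄ * mdot D D + α₁ * (dot n (mv D n))^2 + 2 * dot m (mv D n)
          + (α₅ + α₆) * dot (mv D n) (mv D n) + dot m m :=
  stmt0_general δ α₁ α₄ α₅ α₆ hδ hcoef
end
end

section
/- Let n, m ∈ ℝ³, let D ∈ ℝ^{3×3} be symmetric and Ω ∈ ℝ^{3×3} be antisymmetric, and let α₁, …, α₆ ∈ ℝ satisfy α₂ + α₃ = 1, α₃ − α₂ = 1, and α₆ − α₅ = 1. Then (m + Dn)·(m + Ωn) + [α₁(Dn·n)(n⊗n) + α₂(m⊗n) + α₃(n⊗m) + α₄D + α₅(Dn⊗n) + α₆(n⊗Dn)] : (D + Ω) = α₁(n·Dn)² + 2(m·Dn) + α₄|D|² + (α₅+α₆)|Dn|² + |m|². -/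
noncomputable section
open MeasureTheory Real

/-- the Leslie stress dissipation identity. With `α₂ + α₃ = 1`,
`α₃ − α₂ = 1`, `α₆ − α₅ = 1` (Leslie–Parodi relations with `γ₁ = γ₂ = 1`),
for `m, n ∈ ℝ³`, `D` symmetric and `Ω` antisymmetric,
`(m + Dn)·(m + Ωn) + σ : (D + Ω) = α₁(n·Dn)² + 2(m·Dn) + α₄|D|² + (α₅+α₆)|Dn|² + |m|²`. -/
theorem stmt1 (n m : V3) (D Ω : M3) (hD : D.IsSymm) (hΩ : Ω.transpose = -Ω)
    (α₁ α₂ α₃ α₄ α₅ α₆ : ℝ)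
    (h23 : α₂ + α₃ = 1) (h32 : α₃ - α₂ = 1) (h65 : α₆ - α₅ = 1) :
    dot (m + mv D n) (m + mv Ω n)
      + mdot ((α₁ * dot (mv D n) n) • outer n n + α₂ • outer m n + α₃ • outer n m
              + α₄ • D + α₅ • outer (mv D n) n + α₆ • outer n (mv D n)) (D + Ω)
      = α₁ * (dot n (mv D n))^2 + 2 * dot m (mv D n) + α₄ * mdot D D
        + (α₅ + α₆) * dot (mv D n) (mv D n) + dot m m := by
  have hα₂ : α₂ = 0 := by linarith
  have hα₃ : α₃ = 1 := by linarith
  have hα₆ : α₆ = α₅ + 1 := by linarith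
  subst hα₂ hα₃ hα₆
  have hd : ∀ i j, D j i = D i j := fun i j => by
    have := congrFun (congrFun hD j) i
    simpa [Matrix.transpose_apply] using this.symm
  have hw : ∀ i j, Ω j i = -Ω i j := fun i j => by
    have := congrFun (congrFun hΩ i) j
    simpa [Matrix.transpose_apply] using this
  have w00 : Ω 0 0 = 0 := by have := hw 0 0; linarith
  have w11 : Ω 1 1 = 0 := by have := hw 1 1; linarith
  have w22 : Ω 2 2 = 0 := by have := hw 2 2; linarith
  simp only [dot, mdot, mv, outer, Matrix.mulVec, dotProduct, Matrix.add_apply,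
    Matrix.smul_apply, Matrix.of_apply, Pi.add_apply, smul_eq_mul, Fin.sum_univ_three]
  rw [hd 0 1, hd 0 2, hd 1 2, hw 0 1, hw 0 2, hw 1 2, w00, w11, w22]
  ring
end
end

section
/- Let T > 0, ε ≥ 0 and c̄ > 0. Let c_p, c_m, Φ : ℝ³×[0,T] → ℝ and v, n : ℝ³×[0,T] → ℝ³ be smooth and 2π-periodic in the space variables, with div v = 0, satisfying on ℝ³×[0,T]: ∂_t c_p + v·∇c_p = div((Id + ε n⊗n)(∇c_p + c_p∇Φ)), ∂_t c_m + v·∇c_m = div((Id + ε n⊗n)(∇c_m − c_m∇Φ)), and −div((Id + ε n⊗n)∇Φ) = c_p − c_m. If 0 ≤ c_p(x,0) ≤ c̄ and 0 ≤ c_m(x,0) ≤ c̄ for all x ∈ ℝ³, then |c_p(x,t)| ≤ c̄ and |c_m(x,t)| ≤ c̄ for all (x,t) ∈ ℝ³×[0,T]. -/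
noncomputable section
open MeasureTheory Real

open ContDiff Filter Set Topology Function

section Aux

lemma pd_add {f g : V3 → ℝ} {x : V3} (hf : DifferentiableAt ℝ f x) (hg : DifferentiableAt ℝ g x)
    (i : Fin 3) : pd i (fun y => f y + g y) x = pd i f x + pd i g x := by
  unfold pd; rw [fderiv_fun_add hf hg]; rfl

lemma pd_neg {f : V3 → ℝ} {x : V3} (i : Fin 3) : pd i (fun y => -f y) x = -pd i f x := by
  unfold pd; rw [fderiv_fun_neg]; rfl

lemma pd_mul {f g : V3 → ℝ} {x : V3} (hf : DifferentiableAt ℝ f x) (hg : DifferentiableAt ℝ g x)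
    (i : Fin 3) : pd i (fun y => f y * g y) x = f x * pd i g x + g x * pd i f x := by
  unfold pd; rw [fderiv_fun_mul hf hg]; rfl

lemma pd_const_mul {f : V3 → ℝ} {x : V3} (hf : DifferentiableAt ℝ f x) (c : ℝ)
    (i : Fin 3) : pd i (fun y => c * f y) x = c * pd i f x := by
  unfold pd; rw [fderiv_const_mul hf]; rfl

lemma pd_sum {ι : Type*} (s : Finset ι) {f : ι → V3 → ℝ} {x : V3}
    (hf : ∀ j ∈ s, DifferentiableAt ℝ (f j) x) (i : Fin 3) :
    pd i (fun y => ∑ j ∈ s, f j y) x = ∑ j ∈ s, pd i (f j) x := by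
  unfold pd; rw [fderiv_fun_sum hf]; simp

lemma pd_contDiff {f : V3 → ℝ} (hf : ContDiff ℝ ∞ f) (i : Fin 3) :
    ContDiff ℝ ∞ (pd i f) := by
  unfold pd
  exact (hf.fderiv_right (le_refl _)).clm_apply contDiff_const

lemma matA_apply (ε : ℝ) (n : V3) (i j : Fin 3) :
    matA ε n i j = (if i = j then 1 else 0) + ε * (n i * n j) := by
  simp [matA, outer, Matrix.one_apply, Matrix.add_apply]

lemma hasDerivAt_line (f : V3 → ℝ) (hf : Differentiable ℝ f) (x0 u : V3) (s : ℝ) :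
    HasDerivAt (fun r : ℝ => f (x0 + r • u)) (fderiv ℝ f (x0 + s • u) u) s := by
  have h1 : HasDerivAt (fun r : ℝ => x0 + r • u) u s := by
    simpa using ((hasDerivAt_id s).smul_const u).const_add x0
  exact ((hf (x0 + s • u)).hasFDerivAt).comp_hasDerivAt s h1

lemma single_sum (u : V3) : u = ∑ j, u j • (Pi.single j (1:ℝ) : V3) := by
  funext k
  simp [Pi.single_apply]

lemma fderiv_apply_sum (f : V3 → ℝ) (x u : V3) :
    fderiv ℝ f x u = ∑ j, u j * pd j f x := by
  conv_lhs => rw [single_sum u]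
  rw [map_sum]
  simp [pd]

lemma line_contDiff (f : V3 → ℝ) (hf : ContDiff ℝ ∞ f) (x0 u : V3) :
    ContDiff ℝ ∞ (fun r : ℝ => f (x0 + r • u)) :=
  hf.comp (contDiff_const.add (contDiff_id.smul contDiff_const))

lemma deriv_deriv_line (f : V3 → ℝ) (hf : ContDiff ℝ ∞ f) (x0 u : V3) :
    deriv (deriv (fun r : ℝ => f (x0 + r • u))) 0
      = ∑ i, ∑ j, u i * u j * pd i (fun y => pd j f y) x0 := by
  have hdiff : Differentiable ℝ f := hf.differentiable (by simp)
  have h1 : deriv (fun r : ℝ => f (x0 + r • u)) = fun r => ∑ j, u j * pd j f (x0 + r • u) := by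
    funext s
    rw [(hasDerivAt_line f hdiff x0 u s).deriv, fderiv_apply_sum]
  rw [h1]
  have h2 : ∀ j : Fin 3, HasDerivAt (fun r : ℝ => pd j f (x0 + r • u))
      (fderiv ℝ (pd j f) x0 u) 0 := by
    intro j
    have := hasDerivAt_line (pd j f) ((pd_contDiff hf j).differentiable (by simp)) x0 u 0
    simpa using this
  have h3 : HasDerivAt (fun r : ℝ => ∑ j, u j * pd j f (x0 + r • u))
      (∑ j, u j * fderiv ℝ (pd j f) x0 u) 0 := by
    exact HasDerivAt.fun_sum fun j _ => (h2 j).const_mul (u j)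
  rw [h3.deriv]
  rw [Finset.sum_comm]
  apply Finset.sum_congr rfl
  intro j _
  rw [fderiv_apply_sum, Finset.mul_sum]
  apply Finset.sum_congr rfl
  intro i _
  ring

lemma second_nonneg_of_min (g : ℝ → ℝ) (hg : ContDiff ℝ ∞ g) (hmin : ∀ s, g 0 ≤ g s) :
    0 ≤ deriv (deriv g) 0 := by
  by_contra h
  push_neg at h
  have hloc : IsLocalMin g 0 := Filter.Eventually.of_forall hmin
  have hg1 : deriv g 0 = 0 := hloc.deriv_eq_zero
  have hdg : ContDiff ℝ ∞ (deriv g) := by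
    have := hg.iterate_deriv 1
    simpa using this
  have hdd : HasDerivAt (deriv g) (deriv (deriv g) 0) 0 :=
    (hdg.differentiable (by simp) 0).hasDerivAt
  have hslope : Tendsto (slope (deriv g) 0) (𝓝[≠] 0) (𝓝 (deriv (deriv g) 0)) :=
    hasDerivAt_iff_tendsto_slope.mp hdd
  have hev : ∀ᶠ s in 𝓝[≠] (0:ℝ), slope (deriv g) 0 s < 0 :=
    hslope.eventually_lt_const h  |>.mono (fun _ hh => hh)
  have hev2 : ∀ᶠ s in 𝓝[<] (0:ℝ), slope (deriv g) 0 s < 0 :=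
    hev.filter_mono (nhdsWithin_mono _ (fun s hs => ne_of_lt hs))
  obtain ⟨l, hl, hsub⟩ := mem_nhdsLT_iff_exists_Ioo_subset.mp hev2
  have hl0 : l < 0 := hl
  have hpos : ∀ s ∈ Ioo l (0:ℝ), 0 < deriv g s := by
    intro s hs
    have := hsub hs
    simp only [mem_setOf_eq, slope_def_field, hg1, sub_zero] at this
    have hs0 : s < 0 := hs.2
    -- this : deriv g s / s < 0, s < 0 so deriv g s > 0
    by_contra hc
    push_neg at hc
    have : 0 ≤ deriv g s / s := div_nonneg_of_nonpos hc hs0.le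
    linarith [hsub hs, show deriv g s / s < 0 by simpa [slope_def_field, hg1] using hsub hs]
  have hmono : StrictMonoOn g (Icc (l/2) 0) := by
    apply strictMonoOn_of_deriv_pos (convex_Icc _ _) (hg.continuous.continuousOn)
    intro s hs
    rw [interior_Icc] at hs
    exact hpos s ⟨by linarith [hs.1], hs.2⟩
  have : g (l/2) < g 0 := hmono ⟨le_rfl, by linarith⟩ ⟨by linarith, le_rfl⟩ (by linarith)
  exact absurd (hmin (l/2)) (by linarith)

lemma deriv_nonpos_of_min_right (g : ℝ → ℝ) (t0 T : ℝ) (h0 : 0 < t0) (ht0T : t0 ≤ T)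
    (hdiff : DifferentiableAt ℝ g t0) (hmin : ∀ s, 0 ≤ s → s ≤ T → g t0 ≤ g s) :
    deriv g t0 ≤ 0 := by
  have hd : Tendsto (slope g t0) (𝓝[≠] t0) (𝓝 (deriv g t0)) :=
    hasDerivAt_iff_tendsto_slope.mp hdiff.hasDerivAt
  have hd' : Tendsto (slope g t0) (𝓝[<] t0) (𝓝 (deriv g t0)) :=
    hd.mono_left (nhdsWithin_mono _ (fun s hs => ne_of_lt hs))
  refine le_of_tendsto hd' ?_
  have hIoo : Ioo (0:ℝ) t0 ∈ 𝓝[<] t0 := Ioo_mem_nhdsLT_of_mem ⟨h0, le_rfl⟩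
  filter_upwards [hIoo] with s hs
  have h1 : g t0 ≤ g s := hmin s hs.1.le (le_trans hs.2.le ht0T)
  have h2 : s - t0 < 0 := by linarith [hs.2]
  rw [slope_def_field]
  exact div_nonpos_of_nonneg_of_nonpos (by linarith) h2.le

lemma per_shift {α : Type*} {f : V3 → α} (hf : Per f) (x : V3) (i : Fin 3) (k : ℤ) :
    f (x + Pi.single i (2 * Real.pi * k)) = f x := by
  induction k using Int.induction_on with
  | zero => simp
  | succ n ih =>
    have he : (x + Pi.single i (2 * Real.pi * ((n:ℤ) + 1 : ℤ)))
        = (x + Pi.single i (2 * Real.pi * (n:ℤ))) + Pi.single i (2 * Real.pi) := by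
      rw [add_assoc, ← Pi.single_add]
      push_cast
      ring_nf
    rw [he, hf _ i, ih]
  | pred n ih =>
    have he : (x + Pi.single i (2 * Real.pi * (-(n:ℤ) : ℤ)))
        = (x + Pi.single i (2 * Real.pi * (-(n:ℤ) - 1 : ℤ))) + Pi.single i (2 * Real.pi) := by
      rw [add_assoc, ← Pi.single_add]
      push_cast
      ring_nf
    rw [← ih, he]
    exact (hf _ i).symm

lemma exists_rep (x : V3) : ∃ y : V3, y ∈ Q3 ∧
    ∀ {α : Type} (f : V3 → α), Per f → f y = f x := by
  set k : Fin 3 → ℤ := fun i => ⌊(x i + Real.pi) / (2 * Real.pi)⌋ with hk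
  refine ⟨fun i => x i - 2 * Real.pi * k i, ?_, ?_⟩
  · rw [Q3, Set.mem_Icc]
    constructor <;> (rw [Pi.le_def]; intro i)
    · show -Real.pi ≤ x i - 2 * Real.pi * (k i)
      have h1 : (k i : ℝ) ≤ (x i + Real.pi) / (2 * Real.pi) := Int.floor_le _
      have h2 : 0 < 2 * Real.pi := by positivity
      rw [le_div_iff₀ h2] at h1
      nlinarith [h1]
    · show x i - 2 * Real.pi * (k i) ≤ Real.pi
      have h1 : (x i + Real.pi) / (2 * Real.pi) < k i + 1 := Int.lt_floor_add_one _
      have h2 : 0 < 2 * Real.pi := by positivity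
      rw [div_lt_iff₀ h2] at h1
      nlinarith [h1]
  · intro α f hf
    have hx : x = (((fun i => x i - 2 * Real.pi * k i) + Pi.single 0 (2 * Real.pi * (k 0)))
        + Pi.single 1 (2 * Real.pi * (k 1))) + Pi.single 2 (2 * Real.pi * (k 2)) := by
      funext i
      fin_cases i <;> simp [Pi.single_apply] <;> ring
    conv_rhs => rw [hx]
    rw [per_shift hf _ 2 (k 2), per_shift hf _ 1 (k 1), per_shift hf _ 0 (k 0)]

lemma matA_contDiff (ε : ℝ) (N : V3 → V3) (hN : ∀ k, ContDiff ℝ ∞ (fun y => N y k))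
    (i j : Fin 3) : ContDiff ℝ ∞ (fun y => matA ε (N y) i j) := by
  have he : (fun y => matA ε (N y) i j)
      = fun y => (if i = j then (1:ℝ) else 0) + ε * (N y i * N y j) :=
    funext fun y => matA_apply ε (N y) i j
  rw [he]
  exact contDiff_const.add (contDiff_const.mul ((hN i).mul (hN j)))

lemma expand_divg (ε σ : ℝ) (c0 φ0 : V3 → ℝ) (N : V3 → V3)
    (hc : ContDiff ℝ ∞ c0) (hφ : ContDiff ℝ ∞ φ0) (hN : ∀ k, ContDiff ℝ ∞ (fun y => N y k))
    (x0 : V3) (h1 : ∀ j, pd j c0 x0 = 0) :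
    divg (fun y => mv (matA ε (N y)) (grad c0 y + σ • (c0 y • grad φ0 y))) x0
      = (∑ i, ∑ j, matA ε (N x0) i j * pd i (fun y => pd j c0 y) x0)
        + σ * (c0 x0 * divg (fun y => mv (matA ε (N y)) (grad φ0 y)) x0) := by
  have hA : ∀ i j, ContDiff ℝ ∞ (fun y => matA ε (N y) i j) := matA_contDiff ε N hN
  set q : Fin 3 → V3 → ℝ := fun j y => pd j c0 y + σ * (c0 y * pd j φ0 y) with hq
  have hqcd : ∀ j, ContDiff ℝ ∞ (q j) := fun j =>
    (pd_contDiff hc j).add (contDiff_const.mul (hc.mul (pd_contDiff hφ j)))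
  -- component rewriting
  have hW : ∀ i, (fun y => mv (matA ε (N y)) (grad c0 y + σ • (c0 y • grad φ0 y)) i)
      = fun y => ∑ j, matA ε (N y) i j * q j y := by
    intro i; funext y
    simp [mv, Matrix.mulVec, dotProduct, grad, hq, mul_comm]
  have hP : ∀ i, (fun y => mv (matA ε (N y)) (grad φ0 y) i)
      = fun y => ∑ j, matA ε (N y) i j * pd j φ0 y := by
    intro i; funext y
    simp [mv, Matrix.mulVec, dotProduct, grad]
  have hdA : ∀ i j (y : V3), DifferentiableAt ℝ (fun z => matA ε (N z) i j) y := fun i j y =>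
    ((hA i j).differentiable (by simp)) y
  have hdq : ∀ j (y : V3), DifferentiableAt ℝ (q j) y := fun j y =>
    ((hqcd j).differentiable (by simp)) y
  have hdc : ∀ (y : V3), DifferentiableAt ℝ c0 y := fun y =>
    (hc.differentiable (by simp)) y
  have hdφj : ∀ j (y : V3), DifferentiableAt ℝ (fun z => pd j φ0 z) y := fun j y =>
    ((pd_contDiff hφ j).differentiable (by simp)) y
  have hdcj : ∀ j (y : V3), DifferentiableAt ℝ (fun z => pd j c0 z) y := fun j y =>
    ((pd_contDiff hc j).differentiable (by simp)) y
  -- main LHS computation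
  have hL : divg (fun y => mv (matA ε (N y)) (grad c0 y + σ • (c0 y • grad φ0 y))) x0
      = ∑ i, ∑ j, (matA ε (N x0) i j * (pd i (fun y => pd j c0 y) x0
            + σ * (c0 x0 * pd i (fun y => pd j φ0 y) x0))
          + σ * (c0 x0 * pd j φ0 x0) * pd i (fun y => matA ε (N y) i j) x0) := by
    unfold divg
    apply Finset.sum_congr rfl
    intro i _
    rw [hW i]
    rw [pd_sum Finset.univ (fun j hj => ((hdA i j x0).fun_mul (hdq j x0))) i]
    apply Finset.sum_congr rfl
    intro j _
    rw [pd_mul (hdA i j x0) (hdq j x0) i]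
    have hqx0 : q j x0 = σ * (c0 x0 * pd j φ0 x0) := by
      rw [hq]; simp only []; rw [h1 j]; ring
    have hpdq : pd i (q j) x0 = pd i (fun y => pd j c0 y) x0
        + σ * (c0 x0 * pd i (fun y => pd j φ0 y) x0) := by
      rw [hq]
      simp only []
      rw [pd_add (hdcj j x0) (((hdc x0).fun_mul (hdφj j x0)).const_mul σ) i]
      rw [pd_const_mul ((hdc x0).fun_mul (hdφj j x0)) σ i]
      rw [pd_mul (hdc x0) (hdφj j x0) i]
      rw [h1 i]
      ring
    rw [hqx0, hpdq]
  -- RHS divg(A∇φ) computation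
  have hR : divg (fun y => mv (matA ε (N y)) (grad φ0 y)) x0
      = ∑ i, ∑ j, (matA ε (N x0) i j * pd i (fun y => pd j φ0 y) x0
          + pd j φ0 x0 * pd i (fun y => matA ε (N y) i j) x0) := by
    unfold divg
    apply Finset.sum_congr rfl
    intro i _
    rw [hP i]
    rw [pd_sum Finset.univ (fun j hj => ((hdA i j x0).fun_mul (hdφj j x0))) i]
    apply Finset.sum_congr rfl
    intro j _
    rw [pd_mul (hdA i j x0) (hdφj j x0) i]
  rw [hL, hR]
  rw [Finset.mul_sum, Finset.mul_sum, ← Finset.sum_add_distrib]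
  apply Finset.sum_congr rfl
  intro i _
  rw [Finset.mul_sum, Finset.mul_sum, ← Finset.sum_add_distrib]
  apply Finset.sum_congr rfl
  intro j _
  ring

lemma pd_eq_zero_of_min (f : V3 → ℝ) (hf : ContDiff ℝ ∞ f) (x0 : V3)
    (hmin : ∀ y, f x0 ≤ f y) (j : Fin 3) : pd j f x0 = 0 := by
  have hd := hasDerivAt_line f (hf.differentiable (by simp)) x0 (Pi.single j 1) 0
  rw [zero_smul, add_zero] at hd
  have hloc : IsLocalMin (fun r : ℝ => f (x0 + r • (Pi.single j 1 : V3))) 0 :=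
    Filter.Eventually.of_forall fun s => by simpa using hmin _
  have h0 := hloc.deriv_eq_zero
  rw [hd.deriv] at h0
  exact h0

lemma quad_nonneg (f : V3 → ℝ) (hf : ContDiff ℝ ∞ f) (x0 : V3) (hmin : ∀ y, f x0 ≤ f y)
    (u : V3) : 0 ≤ ∑ i, ∑ j, u i * u j * pd i (fun y => pd j f y) x0 := by
  rw [← deriv_deriv_line f hf x0 u]
  apply second_nonneg_of_min _ (line_contDiff f hf x0 u)
  intro s; simpa using hmin _

lemma Hsum_nonneg (ε : ℝ) (hε : 0 ≤ ε) (f : V3 → ℝ) (hf : ContDiff ℝ ∞ f) (N0 : V3) (x0 : V3)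
    (hmin : ∀ y, f x0 ≤ f y) :
    0 ≤ ∑ i, ∑ j, matA ε N0 i j * pd i (fun y => pd j f y) x0 := by
  have hsplit : ∑ i, ∑ j, matA ε N0 i j * pd i (fun y => pd j f y) x0
      = (∑ i : Fin 3, pd i (fun y => pd i f y) x0)
        + ε * ∑ i, ∑ j, N0 i * N0 j * pd i (fun y => pd j f y) x0 := by
    rw [Finset.mul_sum, ← Finset.sum_add_distrib]
    apply Finset.sum_congr rfl
    intro i _
    have hrow : ∑ j, matA ε N0 i j * pd i (fun y => pd j f y) x0
        = (∑ j, (if i = j then (1:ℝ) else 0) * pd i (fun y => pd j f y) x0)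
          + ∑ j, ε * (N0 i * N0 j) * pd i (fun y => pd j f y) x0 := by
      rw [← Finset.sum_add_distrib]
      apply Finset.sum_congr rfl
      intro j _
      rw [matA_apply]
      ring
    rw [hrow]
    congr 1
    · simp
    · rw [Finset.mul_sum]
      apply Finset.sum_congr rfl
      intro j _
      ring
  rw [hsplit]
  have hdiag : ∀ i : Fin 3, (0:ℝ) ≤ pd i (fun y => pd i f y) x0 := by
    intro i
    have h := quad_nonneg f hf x0 hmin (Pi.single i 1)
    have he : ∑ a, ∑ b, (Pi.single i (1:ℝ) : V3) a * (Pi.single i 1 : V3) b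
        * pd a (fun y => pd b f y) x0 = pd i (fun y => pd i f y) x0 := by
      simp [Pi.single_apply]
    linarith [he ▸ h]
  have h2 := quad_nonneg f hf x0 hmin N0
  have h3 : (0:ℝ) ≤ ∑ i : Fin 3, pd i (fun y => pd i f y) x0 :=
    Finset.sum_nonneg fun i _ => hdiag i
  nlinarith

lemma divg_neg (w : V3 → V3) (x : V3) : divg (fun y => -(w y)) x = - divg w x := by
  unfold divg
  rw [← Finset.sum_neg_distrib]
  apply Finset.sum_congr rfl
  intro i _
  exact pd_neg i

lemma slice_x {f : V3 → ℝ → ℝ} (hf : ContDiff ℝ ∞ (Function.uncurry f)) (t : ℝ) :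
    ContDiff ℝ ∞ (fun y => f y t) := hf.comp (contDiff_id.prodMk contDiff_const)

lemma slice_t {f : V3 → ℝ → ℝ} (hf : ContDiff ℝ ∞ (Function.uncurry f)) (x : V3) :
    ContDiff ℝ ∞ (fun s => f x s) := hf.comp (contDiff_const.prodMk contDiff_id)

lemma slice_vec {n : V3 → ℝ → V3} (hn : ContDiff ℝ ∞ (Function.uncurry n)) (t : ℝ) :
    ∀ k, ContDiff ℝ ∞ (fun y => n y t k) := by
  have h : ContDiff ℝ ∞ (fun y => n y t) := hn.comp (contDiff_id.prodMk contDiff_const)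
  exact fun k => contDiff_pi.mp h k

lemma key (T ε C δ σ : ℝ) (hT : 0 < T) (hε : 0 ≤ ε) (hδ : 0 < δ)
    (c Φ : V3 → ℝ → ℝ) (v n : V3 → ℝ → V3)
    (hc : ContDiff ℝ ∞ (Function.uncurry c)) (hΦ : ContDiff ℝ ∞ (Function.uncurry Φ))
    (hn : ContDiff ℝ ∞ (Function.uncurry n))
    (x0 : V3) (t0 : ℝ) (ht00 : 0 < t0) (ht0T : t0 ≤ T)
    (heq : deriv (fun s => c x0 s) t0 + dot (v x0 t0) (grad (fun y => c y t0) x0)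
        = divg (fun y => mv (matA ε (n y t0))
            (grad (fun z => c z t0) y + σ • (c y t0 • grad (fun z => Φ z t0) y))) x0)
    (hsign : C * c x0 t0
        ≤ σ * (c x0 t0
            * divg (fun y => mv (matA ε (n y t0)) (grad (fun z => Φ z t0) y)) x0))
    (hs : ∀ y, c x0 t0 ≤ c y t0)
    (ht : ∀ s, 0 ≤ s → s ≤ T →
      c x0 t0 * Real.exp (-(C*t0)) + δ*t0 ≤ c x0 s * Real.exp (-(C*s)) + δ*s) : False := by
  have hc0 : ContDiff ℝ ∞ (fun y => c y t0) := slice_x hc t0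
  have hφ0 : ContDiff ℝ ∞ (fun y => Φ y t0) := slice_x hΦ t0
  have hN : ∀ k, ContDiff ℝ ∞ (fun y => n y t0 k) := slice_vec hn t0
  have h1 : ∀ j, pd j (fun y => c y t0) x0 = 0 :=
    fun j => pd_eq_zero_of_min _ hc0 x0 hs j
  have hdot : dot (v x0 t0) (grad (fun y => c y t0) x0) = 0 := by
    unfold dot
    apply Finset.sum_eq_zero
    intro i _
    have hgi : grad (fun y => c y t0) x0 i = pd i (fun y => c y t0) x0 := rfl
    rw [hgi, h1 i, mul_zero]
  have hexpand : divg (fun y => mv (matA ε (n y t0))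
        (grad (fun z => c z t0) y + σ • (c y t0 • grad (fun z => Φ z t0) y))) x0
      = (∑ i, ∑ j, matA ε (n x0 t0) i j * pd i (fun y => pd j (fun z => c z t0) y) x0)
        + σ * (c x0 t0
            * divg (fun y => mv (matA ε (n y t0)) (grad (fun z => Φ z t0) y)) x0) := by
    exact expand_divg ε σ (fun y => c y t0) (fun y => Φ y t0) (fun y => n y t0) hc0 hφ0 hN x0 h1
  have hH : 0 ≤ ∑ i, ∑ j, matA ε (n x0 t0) i j * pd i (fun y => pd j (fun z => c z t0) y) x0 := by
    exact Hsum_nonneg ε hε (fun y => c y t0) hc0 (n x0 t0) x0 hs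
  have hDlow : C * c x0 t0 ≤ deriv (fun s => c x0 s) t0 := by
    rw [hdot, hexpand] at heq
    linarith
  have htt : ContDiff ℝ ∞ (fun s => c x0 s) := slice_t hc x0
  have hc' : HasDerivAt (fun s => c x0 s) (deriv (fun s => c x0 s) t0) t0 :=
    ((htt.differentiable (by simp)) t0).hasDerivAt
  have hexp' : HasDerivAt (fun s : ℝ => Real.exp (-(C*s))) (Real.exp (-(C*t0)) * (-C)) t0 := by
    have hlin : HasDerivAt (fun s : ℝ => -(C*s)) (-C) t0 := by
      simpa using ((hasDerivAt_id t0).const_mul (-C))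
    exact hlin.exp
  have hδlin : HasDerivAt (fun s : ℝ => δ*s) δ t0 := by
    simpa using (hasDerivAt_id t0).const_mul δ
  have hg : HasDerivAt (fun s : ℝ => c x0 s * Real.exp (-(C*s)) + δ*s)
      (deriv (fun s => c x0 s) t0 * Real.exp (-(C*t0))
        + c x0 t0 * (Real.exp (-(C*t0)) * (-C)) + δ) t0 := (hc'.mul hexp').add hδlin
  have hder : deriv (fun s : ℝ => c x0 s * Real.exp (-(C*s)) + δ*s) t0 ≤ 0 :=
    deriv_nonpos_of_min_right _ t0 T ht00 ht0T hg.differentiableAt ht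
  rw [hg.deriv] at hder
  have hE : 0 < Real.exp (-(C*t0)) := Real.exp_pos _
  nlinarith [mul_le_mul_of_nonneg_right hDlow hE.le]


lemma hK_compact (T : ℝ) : IsCompact (Q3 ×ˢ Set.Icc (0:ℝ) T) :=
  isCompact_Icc.prod isCompact_Icc

lemma hK_nonempty (T : ℝ) (hT : 0 < T) : (Q3 ×ˢ Set.Icc (0:ℝ) T).Nonempty := by
  refine ⟨((fun _ => 0), 0), ⟨?_, Set.left_mem_Icc.mpr hT.le⟩⟩
  rw [Q3, Set.mem_Icc]
  constructor <;> (rw [Pi.le_def]; intro i)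
  · show -Real.pi ≤ 0
    linarith [Real.pi_pos]
  · show (0:ℝ) ≤ Real.pi
    linarith [Real.pi_pos]

lemma lower_bound (T ε : ℝ) (hT : 0 < T) (hε : 0 ≤ ε)
    (cp cm Φ : V3 → ℝ → ℝ) (v n : V3 → ℝ → V3)
    (hcp : ContDiff ℝ ∞ (Function.uncurry cp)) (hcm : ContDiff ℝ ∞ (Function.uncurry cm))
    (hΦ : ContDiff ℝ ∞ (Function.uncurry Φ)) (hn : ContDiff ℝ ∞ (Function.uncurry n))
    (hcpp : Per cp) (hcmp : Per cm)
    (heqp : ∀ x t, t ∈ Set.Icc (0:ℝ) T →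
      deriv (fun s => cp x s) t + dot (v x t) (grad (fun y => cp y t) x)
        = divg (fun y => mv (matA ε (n y t))
            (grad (fun z => cp z t) y + cp y t • grad (fun z => Φ z t) y)) x)
    (heqm : ∀ x t, t ∈ Set.Icc (0:ℝ) T →
      deriv (fun s => cm x s) t + dot (v x t) (grad (fun y => cm y t) x)
        = divg (fun y => mv (matA ε (n y t))
            (grad (fun z => cm z t) y - cm y t • grad (fun z => Φ z t) y)) x)
    (heqΦ : ∀ x t, t ∈ Set.Icc (0:ℝ) T →
      -divg (fun y => mv (matA ε (n y t)) (grad (fun z => Φ z t) y)) x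
        = cp x t - cm x t)
    (hinitp : ∀ x, 0 ≤ cp x 0) (hinitm : ∀ x, 0 ≤ cm x 0) :
    ∀ x, ∀ t ∈ Set.Icc (0:ℝ) T, 0 ≤ cp x t ∧ 0 ≤ cm x t := by
  by_contra hcon
  push_neg at hcon
  obtain ⟨x1, t1, ht1, hneg1⟩ := hcon
  have hm1 : min (cp x1 t1) (cm x1 t1) < 0 := by
    rcases lt_or_ge (cp x1 t1) 0 with h | h
    · exact min_lt_iff.mpr (Or.inl h)
    · exact min_lt_iff.mpr (Or.inr (hneg1 h))
  set K := Q3 ×ˢ Set.Icc (0:ℝ) T with hK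
  have hKc : IsCompact K := hK_compact T
  have hKn : K.Nonempty := hK_nonempty T hT
  -- the bound C
  have hdc : Continuous (fun p : V3 × ℝ => |cp p.1 p.2 - cm p.1 p.2|) := by
    have : Continuous (fun p : V3 × ℝ => cp p.1 p.2 - cm p.1 p.2) :=
      hcp.continuous.sub hcm.continuous
    exact this.abs
  obtain ⟨pC, hpCmem, hpCmax⟩ := hKc.exists_isMaxOn hKn hdc.continuousOn
  set C := |cp pC.1 pC.2 - cm pC.1 pC.2| with hCdef
  have hC0 : 0 ≤ C := abs_nonneg _
  have hCb : ∀ x t, t ∈ Set.Icc (0:ℝ) T → |cp x t - cm x t| ≤ C := by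
    intro x t htI
    obtain ⟨y, hyQ, hy⟩ := exists_rep x
    have h1 : cp y t = cp x t := congrFun (hy cp hcpp) t
    have h2 : cm y t = cm x t := congrFun (hy cm hcmp) t
    have hm : (y, t) ∈ K := ⟨hyQ, htI⟩
    have := isMaxOn_iff.mp hpCmax (y, t) hm
    simp only at this
    rw [← h1, ← h2]
    exact this
  -- epsilon shift
  set m1e : ℝ := (min (cp x1 t1) (cm x1 t1)) * Real.exp (-(C*T)) with hm1edef
  have hm1e : m1e < 0 := mul_neg_of_neg_of_pos hm1 (Real.exp_pos _)
  set δ : ℝ := -m1e / (2*T) with hδdef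
  have hδ : 0 < δ := div_pos (by linarith) (by linarith)
  obtain ⟨G, hGdef⟩ : ∃ G : V3 × ℝ → ℝ, G = fun p =>
      min (cp p.1 p.2 * Real.exp (-(C*p.2))) (cm p.1 p.2 * Real.exp (-(C*p.2))) + δ * p.2 :=
    ⟨_, rfl⟩
  have hGc : Continuous G := by
    rw [hGdef]
    have hE : Continuous (fun p : V3 × ℝ => Real.exp (-(C*p.2))) :=
      ((continuous_const.mul continuous_snd).neg).rexp
    exact (((hcp.continuous.mul hE).min (hcm.continuous.mul hE)).add
      (continuous_const.mul continuous_snd))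
  obtain ⟨⟨x0, t0⟩, hp0K, hp0min⟩ := hKc.exists_isMinOn hKn hGc.continuousOn
  have hx0Q : x0 ∈ Q3 := hp0K.1
  have ht0I : t0 ∈ Set.Icc (0:ℝ) T := hp0K.2
  have hGmin : ∀ p ∈ K, G (x0, t0) ≤ G p := fun p hp => isMinOn_iff.mp hp0min p hp
  -- G (x0,t0) < 0
  obtain ⟨y1, hy1Q, hy1⟩ := exists_rep x1
  have hcp1 : cp y1 t1 = cp x1 t1 := congrFun (hy1 cp hcpp) t1
  have hcm1 : cm y1 t1 = cm x1 t1 := congrFun (hy1 cm hcmp) t1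
  have hEmono : Real.exp (-(C*T)) ≤ Real.exp (-(C*t1)) := by
    apply Real.exp_le_exp.mpr
    nlinarith [ht1.2, hC0]
  have hGy1 : G (y1, t1) < 0 := by
    have hminmul : min (cp x1 t1 * Real.exp (-(C*t1))) (cm x1 t1 * Real.exp (-(C*t1)))
        ≤ (min (cp x1 t1) (cm x1 t1)) * Real.exp (-(C*t1)) := by
      rcases le_total (cp x1 t1) (cm x1 t1) with h | h
      · rw [min_eq_left h]
        exact min_le_left _ _
      · rw [min_eq_right h]
        exact min_le_right _ _
    have h2 : (min (cp x1 t1) (cm x1 t1)) * Real.exp (-(C*t1)) ≤ m1e := by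
      rw [hm1edef]
      exact mul_le_mul_of_nonpos_left hEmono hm1.le
    have h3 : δ * t1 ≤ δ * T := mul_le_mul_of_nonneg_left ht1.2 hδ.le
    have h4 : δ * T = -m1e / 2 := by
      rw [hδdef]
      field_simp
    have : G (y1, t1) ≤ m1e + -m1e/2 := by
      simp only [hGdef, hcp1, hcm1]
      linarith [hminmul, h2, h3, h4]
    nlinarith [this, hm1e]
  have hG0 : G (x0, t0) < 0 := lt_of_le_of_lt (hGmin (y1, t1) ⟨hy1Q, ht1⟩) hGy1
  have ht00 : 0 ≤ t0 := ht0I.1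
  have hδt0 : 0 ≤ δ * t0 := mul_nonneg hδ.le ht00
  have hE0 : 0 < Real.exp (-(C*t0)) := Real.exp_pos _
  have hdval : divg (fun y => mv (matA ε (n y t0)) (grad (fun z => Φ z t0) y)) x0
      = cm x0 t0 - cp x0 t0 := by
    linarith [heqΦ x0 t0 ht0I]
  rcases le_total (cp x0 t0) (cm x0 t0) with hbr | hbr
  · -- branch cp
    have hmineq : min (cp x0 t0 * Real.exp (-(C*t0))) (cm x0 t0 * Real.exp (-(C*t0)))
        = cp x0 t0 * Real.exp (-(C*t0)) :=
      min_eq_left (mul_le_mul_of_nonneg_right hbr hE0.le)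
    have hGx0 : G (x0, t0) = cp x0 t0 * Real.exp (-(C*t0)) + δ * t0 := by
      simp only [hGdef, hmineq]
    have hXneg : cp x0 t0 < 0 := by
      by_contra hc
      push_neg at hc
      have : 0 ≤ cp x0 t0 * Real.exp (-(C*t0)) := mul_nonneg hc hE0.le
      linarith [hG0, hGx0 ▸ hG0]
    have ht0pos : 0 < t0 := by
      rcases eq_or_lt_of_le ht00 with h | h
      · exfalso
        have := hinitp x0
        rw [← h] at hXneg
        linarith
      · exact h
    apply key T ε C δ 1 hT hε hδ cp Φ v n hcp hΦ hn x0 t0 ht0pos ht0I.2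
    · -- equation
      have h := heqp x0 t0 ht0I
      have hfield : (fun y => mv (matA ε (n y t0))
            (grad (fun z => cp z t0) y + cp y t0 • grad (fun z => Φ z t0) y))
          = (fun y => mv (matA ε (n y t0))
            (grad (fun z => cp z t0) y + (1:ℝ) • (cp y t0 • grad (fun z => Φ z t0) y))) := by
        funext y
        rw [one_smul]
      rw [hfield] at h
      exact h
    · -- sign
      rw [hdval]
      have h := hCb x0 t0 ht0I
      have h' := abs_le.mp h
      nlinarith [hXneg, h'.1]
    · -- spatial min
      intro y
      obtain ⟨y', hy'Q, hy'⟩ := exists_rep y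
      have hcpy : cp y' t0 = cp y t0 := congrFun (hy' cp hcpp) t0
      have hcmy : cm y' t0 = cm y t0 := congrFun (hy' cm hcmp) t0
      have h := hGmin (y', t0) ⟨hy'Q, ht0I⟩
      have h2 : G (y', t0) ≤ cp y t0 * Real.exp (-(C*t0)) + δ * t0 := by
        simp only [hGdef, hcpy, hcmy]
        have := min_le_left (cp y t0 * Real.exp (-(C*t0))) (cm y t0 * Real.exp (-(C*t0)))
        linarith
      rw [hGx0] at h
      have h3 : cp x0 t0 * Real.exp (-(C*t0)) ≤ cp y t0 * Real.exp (-(C*t0)) := by linarith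
      exact le_of_mul_le_mul_right h3 hE0
    · -- time min
      intro s hs0 hsT
      have h := hGmin (x0, s) ⟨hx0Q, ⟨hs0, hsT⟩⟩
      rw [hGx0] at h
      have h2 : G (x0, s) ≤ cp x0 s * Real.exp (-(C*s)) + δ * s := by
        simp only [hGdef]
        have := min_le_left (cp x0 s * Real.exp (-(C*s))) (cm x0 s * Real.exp (-(C*s)))
        linarith
      linarith
  · -- branch cm
    have hmineq : min (cp x0 t0 * Real.exp (-(C*t0))) (cm x0 t0 * Real.exp (-(C*t0)))
        = cm x0 t0 * Real.exp (-(C*t0)) :=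
      min_eq_right (mul_le_mul_of_nonneg_right hbr hE0.le)
    have hGx0 : G (x0, t0) = cm x0 t0 * Real.exp (-(C*t0)) + δ * t0 := by
      simp only [hGdef, hmineq]
    have hXneg : cm x0 t0 < 0 := by
      by_contra hc
      push_neg at hc
      have : 0 ≤ cm x0 t0 * Real.exp (-(C*t0)) := mul_nonneg hc hE0.le
      linarith [hG0, hGx0 ▸ hG0]
    have ht0pos : 0 < t0 := by
      rcases eq_or_lt_of_le ht00 with h | h
      · exfalso
        have := hinitm x0
        rw [← h] at hXneg
        linarith
      · exact h
    apply key T ε C δ (-1) hT hε hδ cm Φ v n hcm hΦ hn x0 t0 ht0pos ht0I.2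
    · -- equation
      have h := heqm x0 t0 ht0I
      have hfield : (fun y => mv (matA ε (n y t0))
            (grad (fun z => cm z t0) y - cm y t0 • grad (fun z => Φ z t0) y))
          = (fun y => mv (matA ε (n y t0))
            (grad (fun z => cm z t0) y + (-1:ℝ) • (cm y t0 • grad (fun z => Φ z t0) y))) := by
        funext y
        rw [neg_one_smul, ← sub_eq_add_neg]
      rw [hfield] at h
      exact h
    · -- sign
      rw [hdval]
      have h := hCb x0 t0 ht0I
      have h' := abs_le.mp h
      nlinarith [hXneg, h'.2]
    · -- spatial min
      intro y
      obtain ⟨y', hy'Q, hy'⟩ := exists_rep y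
      have hcpy : cp y' t0 = cp y t0 := congrFun (hy' cp hcpp) t0
      have hcmy : cm y' t0 = cm y t0 := congrFun (hy' cm hcmp) t0
      have h := hGmin (y', t0) ⟨hy'Q, ht0I⟩
      have h2 : G (y', t0) ≤ cm y t0 * Real.exp (-(C*t0)) + δ * t0 := by
        simp only [hGdef, hcpy, hcmy]
        have := min_le_right (cp y t0 * Real.exp (-(C*t0))) (cm y t0 * Real.exp (-(C*t0)))
        linarith
      rw [hGx0] at h
      have h3 : cm x0 t0 * Real.exp (-(C*t0)) ≤ cm y t0 * Real.exp (-(C*t0)) := by linarith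
      exact le_of_mul_le_mul_right h3 hE0
    · -- time min
      intro s hs0 hsT
      have h := hGmin (x0, s) ⟨hx0Q, ⟨hs0, hsT⟩⟩
      rw [hGx0] at h
      have h2 : G (x0, s) ≤ cm x0 s * Real.exp (-(C*s)) + δ * s := by
        simp only [hGdef]
        have := min_le_right (cp x0 s * Real.exp (-(C*s))) (cm x0 s * Real.exp (-(C*s)))
        linarith
      linarith


lemma mv_neg (A : M3) (w : V3) : mv A (-w) = -(mv A w) := by
  unfold mv
  exact Matrix.mulVec_neg w A

lemma dot_neg (a b : V3) : dot a (-b) = -(dot a b) := by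
  unfold dot
  simp [mul_neg]

lemma grad_neg (f : V3 → ℝ) (y : V3) :
    grad (fun z => -f z) y = -(grad f y) := by
  funext i
  show pd i (fun z => -f z) y = -(grad f y) i
  rw [pd_neg i]
  rfl

lemma upper_bound (T ε cbar : ℝ) (hT : 0 < T) (hε : 0 ≤ ε) (hcbar : 0 < cbar)
    (cp cm Φ : V3 → ℝ → ℝ) (v n : V3 → ℝ → V3)
    (hcp : ContDiff ℝ ∞ (Function.uncurry cp)) (hcm : ContDiff ℝ ∞ (Function.uncurry cm))
    (hΦ : ContDiff ℝ ∞ (Function.uncurry Φ)) (hn : ContDiff ℝ ∞ (Function.uncurry n))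
    (hcpp : Per cp) (hcmp : Per cm)
    (heqp : ∀ x t, t ∈ Set.Icc (0:ℝ) T →
      deriv (fun s => cp x s) t + dot (v x t) (grad (fun y => cp y t) x)
        = divg (fun y => mv (matA ε (n y t))
            (grad (fun z => cp z t) y + cp y t • grad (fun z => Φ z t) y)) x)
    (heqm : ∀ x t, t ∈ Set.Icc (0:ℝ) T →
      deriv (fun s => cm x s) t + dot (v x t) (grad (fun y => cm y t) x)
        = divg (fun y => mv (matA ε (n y t))
            (grad (fun z => cm z t) y - cm y t • grad (fun z => Φ z t) y)) x)
    (heqΦ : ∀ x t, t ∈ Set.Icc (0:ℝ) T →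
      -divg (fun y => mv (matA ε (n y t)) (grad (fun z => Φ z t) y)) x
        = cp x t - cm x t)
    (hinitp : ∀ x, cp x 0 ≤ cbar) (hinitm : ∀ x, cm x 0 ≤ cbar) :
    ∀ x, ∀ t ∈ Set.Icc (0:ℝ) T, cp x t ≤ cbar ∧ cm x t ≤ cbar := by
  by_contra hcon
  push_neg at hcon
  obtain ⟨x1, t1, ht1, hbig1⟩ := hcon
  have hM1 : cbar < max (cp x1 t1) (cm x1 t1) := by
    rcases le_or_gt (cp x1 t1) cbar with h | h
    · exact lt_max_iff.mpr (Or.inr (hbig1 h))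
    · exact lt_max_iff.mpr (Or.inl h)
  set K := Q3 ×ˢ Set.Icc (0:ℝ) T with hK
  have hKc : IsCompact K := hK_compact T
  have hKn : K.Nonempty := hK_nonempty T hT
  set M1 : ℝ := max (cp x1 t1) (cm x1 t1) with hM1def
  set δ : ℝ := (M1 - cbar) / (2*T) with hδdef
  have hδ : 0 < δ := div_pos (by linarith) (by linarith)
  obtain ⟨G, hGdef⟩ : ∃ G : V3 × ℝ → ℝ, G = fun p =>
      min (-(cp p.1 p.2)) (-(cm p.1 p.2)) + δ * p.2 := ⟨_, rfl⟩
  have hGc : Continuous G := by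
    rw [hGdef]
    exact ((hcp.continuous.neg.min hcm.continuous.neg)).add
      (continuous_const.mul continuous_snd)
  obtain ⟨⟨x0, t0⟩, hp0K, hp0min⟩ := hKc.exists_isMinOn hKn hGc.continuousOn
  have hx0Q : x0 ∈ Q3 := hp0K.1
  have ht0I : t0 ∈ Set.Icc (0:ℝ) T := hp0K.2
  have hGmin : ∀ p ∈ K, G (x0, t0) ≤ G p := fun p hp => isMinOn_iff.mp hp0min p hp
  obtain ⟨y1, hy1Q, hy1⟩ := exists_rep x1
  have hcp1 : cp y1 t1 = cp x1 t1 := congrFun (hy1 cp hcpp) t1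
  have hcm1 : cm y1 t1 = cm x1 t1 := congrFun (hy1 cm hcmp) t1
  have hGy1 : G (y1, t1) < -cbar := by
    have hminmax : min (-(cp x1 t1)) (-(cm x1 t1)) = -M1 := by
      rw [hM1def]
      rcases le_total (cp x1 t1) (cm x1 t1) with h | h
      · rw [max_eq_right h, min_eq_right (neg_le_neg h)]
      · rw [max_eq_left h, min_eq_left (neg_le_neg h)]
    have h3 : δ * t1 ≤ δ * T := mul_le_mul_of_nonneg_left ht1.2 hδ.le
    have h4 : δ * T = (M1 - cbar)/2 := by
      rw [hδdef]
      field_simp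
    have : G (y1, t1) ≤ -M1 + (M1 - cbar)/2 := by
      simp only [hGdef, hcp1, hcm1]
      rw [hminmax]
      linarith
    linarith
  have hG0 : G (x0, t0) < -cbar := lt_of_le_of_lt (hGmin (y1, t1) ⟨hy1Q, ht1⟩) hGy1
  have ht00 : 0 ≤ t0 := ht0I.1
  have hδt0 : 0 ≤ δ * t0 := mul_nonneg hδ.le ht00
  have hdval : divg (fun y => mv (matA ε (n y t0)) (grad (fun z => Φ z t0) y)) x0
      = cm x0 t0 - cp x0 t0 := by
    linarith [heqΦ x0 t0 ht0I]
  rcases le_total (cm x0 t0) (cp x0 t0) with hbr | hbr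
  · -- branch cp: cp is the max
    have hmineq : min (-(cp x0 t0)) (-(cm x0 t0)) = -(cp x0 t0) :=
      min_eq_left (neg_le_neg hbr)
    have hGx0 : G (x0, t0) = -(cp x0 t0) + δ * t0 := by
      simp only [hGdef, hmineq]
    have hXbig : cbar < cp x0 t0 := by
      rw [hGx0] at hG0
      linarith
    have ht0pos : 0 < t0 := by
      rcases eq_or_lt_of_le ht00 with h | h
      · exfalso
        have := hinitp x0
        rw [← h] at hXbig
        linarith
      · exact h
    apply key T ε 0 δ 1 hT hε hδ (fun x s => -cp x s) Φ v n hcp.neg hΦ hn x0 t0 ht0pos ht0I.2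
    · -- equation
      have h := heqp x0 t0 ht0I
      have hfield : (fun y => mv (matA ε (n y t0))
            (grad (fun z => -cp z t0) y + (1:ℝ) • ((-cp y t0) • grad (fun z => Φ z t0) y)))
          = (fun y => -(mv (matA ε (n y t0))
            (grad (fun z => cp z t0) y + cp y t0 • grad (fun z => Φ z t0) y))) := by
        funext y
        rw [grad_neg, one_smul, neg_smul, ← neg_add, mv_neg]
      have hderiv : deriv (fun s => -cp x0 s) t0 = -deriv (fun s => cp x0 s) t0 := deriv.neg
      have hdot : dot (v x0 t0) (grad (fun y => -cp y t0) x0)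
          = -dot (v x0 t0) (grad (fun y => cp y t0) x0) := by
        rw [grad_neg, dot_neg]
      show deriv (fun s => -cp x0 s) t0 + dot (v x0 t0) (grad (fun y => -cp y t0) x0)
          = divg (fun y => mv (matA ε (n y t0))
            (grad (fun z => -cp z t0) y + (1:ℝ) • ((-cp y t0) • grad (fun z => Φ z t0) y))) x0
      rw [hderiv, hdot, hfield, divg_neg]
      linarith
    · -- sign
      show (0:ℝ) * (-cp x0 t0) ≤ 1 * ((-cp x0 t0)
        * divg (fun y => mv (matA ε (n y t0)) (grad (fun z => Φ z t0) y)) x0)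
      rw [hdval]
      nlinarith [hXbig, hbr, hcbar]
    · -- spatial min
      intro y
      obtain ⟨y', hy'Q, hy'⟩ := exists_rep y
      have hcpy : cp y' t0 = cp y t0 := congrFun (hy' cp hcpp) t0
      have hcmy : cm y' t0 = cm y t0 := congrFun (hy' cm hcmp) t0
      have h := hGmin (y', t0) ⟨hy'Q, ht0I⟩
      have h2 : G (y', t0) ≤ -(cp y t0) + δ * t0 := by
        simp only [hGdef, hcpy, hcmy]
        have := min_le_left (-(cp y t0)) (-(cm y t0))
        linarith
      rw [hGx0] at h
      show -cp x0 t0 ≤ -cp y t0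
      linarith
    · -- time min
      intro s hs0 hsT
      have h := hGmin (x0, s) ⟨hx0Q, ⟨hs0, hsT⟩⟩
      rw [hGx0] at h
      have h2 : G (x0, s) ≤ -(cp x0 s) + δ * s := by
        simp only [hGdef]
        have := min_le_left (-(cp x0 s)) (-(cm x0 s))
        linarith
      show -cp x0 t0 * Real.exp (-(0*t0)) + δ*t0 ≤ -cp x0 s * Real.exp (-(0*s)) + δ*s
      rw [zero_mul, zero_mul, neg_zero, Real.exp_zero, mul_one, mul_one]
      linarith
  · -- branch cm: cm is the max
    have hmineq : min (-(cp x0 t0)) (-(cm x0 t0)) = -(cm x0 t0) :=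
      min_eq_right (neg_le_neg hbr)
    have hGx0 : G (x0, t0) = -(cm x0 t0) + δ * t0 := by
      simp only [hGdef, hmineq]
    have hXbig : cbar < cm x0 t0 := by
      rw [hGx0] at hG0
      linarith
    have ht0pos : 0 < t0 := by
      rcases eq_or_lt_of_le ht00 with h | h
      · exfalso
        have := hinitm x0
        rw [← h] at hXbig
        linarith
      · exact h
    apply key T ε 0 δ (-1) hT hε hδ (fun x s => -cm x s) Φ v n hcm.neg hΦ hn x0 t0 ht0pos ht0I.2
    · -- equation
      have h := heqm x0 t0 ht0I
      have hfield : (fun y => mv (matA ε (n y t0))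
            (grad (fun z => -cm z t0) y + (-1:ℝ) • ((-cm y t0) • grad (fun z => Φ z t0) y)))
          = (fun y => -(mv (matA ε (n y t0))
            (grad (fun z => cm z t0) y - cm y t0 • grad (fun z => Φ z t0) y))) := by
        funext y
        rw [grad_neg, neg_one_smul, neg_smul, neg_neg, ← mv_neg]
        congr 1
        abel
      have hderiv : deriv (fun s => -cm x0 s) t0 = -deriv (fun s => cm x0 s) t0 := deriv.neg
      have hdot : dot (v x0 t0) (grad (fun y => -cm y t0) x0)
          = -dot (v x0 t0) (grad (fun y => cm y t0) x0) := by
        rw [grad_neg, dot_neg]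
      show deriv (fun s => -cm x0 s) t0 + dot (v x0 t0) (grad (fun y => -cm y t0) x0)
          = divg (fun y => mv (matA ε (n y t0))
            (grad (fun z => -cm z t0) y + (-1:ℝ) • ((-cm y t0) • grad (fun z => Φ z t0) y))) x0
      rw [hderiv, hdot, hfield, divg_neg]
      linarith
    · -- sign
      show (0:ℝ) * (-cm x0 t0) ≤ (-1) * ((-cm x0 t0)
        * divg (fun y => mv (matA ε (n y t0)) (grad (fun z => Φ z t0) y)) x0)
      rw [hdval]
      nlinarith [hXbig, hbr, hcbar]
    · -- spatial min
      intro y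
      obtain ⟨y', hy'Q, hy'⟩ := exists_rep y
      have hcpy : cp y' t0 = cp y t0 := congrFun (hy' cp hcpp) t0
      have hcmy : cm y' t0 = cm y t0 := congrFun (hy' cm hcmp) t0
      have h := hGmin (y', t0) ⟨hy'Q, ht0I⟩
      have h2 : G (y', t0) ≤ -(cm y t0) + δ * t0 := by
        simp only [hGdef, hcpy, hcmy]
        have := min_le_right (-(cp y t0)) (-(cm y t0))
        linarith
      rw [hGx0] at h
      show -cm x0 t0 ≤ -cm y t0
      linarith
    · -- time min
      intro s hs0 hsT
      have h := hGmin (x0, s) ⟨hx0Q, ⟨hs0, hsT⟩⟩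
      rw [hGx0] at h
      have h2 : G (x0, s) ≤ -(cm x0 s) + δ * s := by
        simp only [hGdef]
        have := min_le_right (-(cp x0 s)) (-(cm x0 s))
        linarith
      show -cm x0 t0 * Real.exp (-(0*t0)) + δ*t0 ≤ -cm x0 s * Real.exp (-(0*s)) + δ*s
      rw [zero_mul, zero_mul, neg_zero, Real.exp_zero, mul_one, mul_one]
      linarith


end Aux

/-- Proposition 3.3: the maximum principle for the charge densities.
For smooth, space-periodic solutions of the two-species Nernst–Planck/Maxwell subsystem
with `div v = 0` and initial data in `[0, c̄]`, one has `|c_p| ≤ c̄` and `|c_m| ≤ c̄`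
on `ℝ³ × [0,T]`. -/
theorem stmt3 (T ε cbar : ℝ) (hT : 0 < T) (hε : 0 ≤ ε) (hcbar : 0 < cbar)
    (cp cm Φ : V3 → ℝ → ℝ) (v n : V3 → ℝ → V3)
    (hcp : ContDiff ℝ (⊤ : ℕ∞) (Function.uncurry cp)) (hcm : ContDiff ℝ (⊤ : ℕ∞) (Function.uncurry cm))
    (hΦ : ContDiff ℝ (⊤ : ℕ∞) (Function.uncurry Φ))
    (hv : ContDiff ℝ (⊤ : ℕ∞) (Function.uncurry v)) (hn : ContDiff ℝ (⊤ : ℕ∞) (Function.uncurry n))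
    (hcpp : Per cp) (hcmp : Per cm) (hΦp : Per Φ) (hvp : Per v) (hnp : Per n)
    (hdiv : ∀ x t, t ∈ Set.Icc (0:ℝ) T → divg (fun y => v y t) x = 0)
    (heqp : ∀ x t, t ∈ Set.Icc (0:ℝ) T →
      deriv (fun s => cp x s) t + dot (v x t) (grad (fun y => cp y t) x)
        = divg (fun y => mv (matA ε (n y t))
            (grad (fun z => cp z t) y + cp y t • grad (fun z => Φ z t) y)) x)
    (heqm : ∀ x t, t ∈ Set.Icc (0:ℝ) T →
      deriv (fun s => cm x s) t + dot (v x t) (grad (fun y => cm y t) x)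
        = divg (fun y => mv (matA ε (n y t))
            (grad (fun z => cm z t) y - cm y t • grad (fun z => Φ z t) y)) x)
    (heqΦ : ∀ x t, t ∈ Set.Icc (0:ℝ) T →
      -divg (fun y => mv (matA ε (n y t)) (grad (fun z => Φ z t) y)) x
        = cp x t - cm x t)
    (hinitp : ∀ x, cp x 0 ∈ Set.Icc (0:ℝ) cbar)
    (hinitm : ∀ x, cm x 0 ∈ Set.Icc (0:ℝ) cbar) :
    ∀ x, ∀ t ∈ Set.Icc (0:ℝ) T, |cp x t| ≤ cbar ∧ |cm x t| ≤ cbar := by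
  have hcp' : ContDiff ℝ ∞ (Function.uncurry cp) := hcp.of_le (by simp)
  have hcm' : ContDiff ℝ ∞ (Function.uncurry cm) := hcm.of_le (by simp)
  have hΦ' : ContDiff ℝ ∞ (Function.uncurry Φ) := hΦ.of_le (by simp)
  have hn' : ContDiff ℝ ∞ (Function.uncurry n) := hn.of_le (by simp)
  have hlow := lower_bound T ε hT hε cp cm Φ v n hcp' hcm' hΦ' hn' hcpp hcmp
    heqp heqm heqΦ (fun x => (hinitp x).1) (fun x => (hinitm x).1)
  have hup := upper_bound T ε cbar hT hε hcbar cp cm Φ v n hcp' hcm' hΦ' hn' hcpp hcmp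
    heqp heqm heqΦ (fun x => (hinitp x).2) (fun x => (hinitm x).2)
  intro x t ht
  obtain ⟨h1, h2⟩ := hlow x t ht
  obtain ⟨h3, h4⟩ := hup x t ht
  constructor <;> rw [abs_le] <;> constructor <;> linarith
end
end

section
/- Let c ≥ 1 and p ≥ 2, and let (b_k)_{k≥0} be a sequence of real numbers with b_k ≥ 1 for all k ≥ 0 and b_{k+1}^{3^k p} ≤ c · (3^k p) · b_k^{3^k p} for every k ≥ 0. Then the series Σ_{j=0}^{∞} log(c · 3^j · p)/(3^j p) converges, for every k ≥ 0 one has log b_k ≤ log b₀ + Σ_{j=0}^{∞} log(c · 3^j · p)/(3^j p), and in particular sup_{k≥0} b_k < ∞. -/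
noncomputable section
open MeasureTheory Real

/-- the elementary recursion lemma concluding the Moser iteration.
If `c ≥ 1`, `p ≥ 2`, `b_k ≥ 1` and `b_{k+1}^{3^k p} ≤ c (3^k p) b_k^{3^k p}`, then
`∑_j log(c 3^j p)/(3^j p)` converges, `log b_k ≤ log b₀ + ∑_j log(c 3^j p)/(3^j p)`,
and `sup_k b_k < ∞`. -/
theorem stmt9 (c p : ℝ) (hc : 1 ≤ c) (hp : 2 ≤ p) (b : ℕ → ℝ)
    (hb : ∀ k, 1 ≤ b k)
    (hrec : ∀ k : ℕ, b (k+1) ^ ((3:ℝ)^k * p) ≤ c * ((3:ℝ)^k * p) * b k ^ ((3:ℝ)^k * p)) :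
    Summable (fun j : ℕ => Real.log (c * 3^j * p) / ((3:ℝ)^j * p))
      ∧ (∀ k : ℕ, Real.log (b k) ≤ Real.log (b 0)
            + ∑' j : ℕ, Real.log (c * 3^j * p) / ((3:ℝ)^j * p))
      ∧ ∃ B : ℝ, ∀ k : ℕ, b k ≤ B := by
  have h3 : (0:ℝ) < 3 := by norm_num
  have hp0 : (0:ℝ) < p := by linarith
  have hc0 : (0:ℝ) < c := by linarith
  have he : ∀ k : ℕ, (0:ℝ) < 3^k * p := fun k => by positivity
  set f : ℕ → ℝ := fun j => Real.log (c * 3^j * p) / ((3:ℝ)^j * p) with hf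
  have hone : ∀ j : ℕ, (1:ℝ) ≤ (3:ℝ)^j := fun j => one_le_pow₀ (by norm_num)
  have hfnn : ∀ j, 0 ≤ f j := by
    intro j
    apply div_nonneg _ (le_of_lt (he j))
    apply Real.log_nonneg
    have h1 : (1:ℝ) ≤ c * 3^j := by nlinarith [hone j]
    nlinarith [h1]
  have hlogsplit : ∀ j : ℕ, Real.log (c * 3^j * p)
      = Real.log c + Real.log ((3:ℝ)^j * p) := by
    intro j
    rw [mul_assoc, Real.log_mul hc0.ne' (he j).ne']
  have hsum : Summable f := by
    have hg : Summable (fun j : ℕ =>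
        (Real.log c + Real.log p) * (1/3:ℝ)^j + Real.log 3 * ((j:ℝ) * (1/3:ℝ)^j)) := by
      apply Summable.add
      · exact (summable_geometric_of_lt_one (by norm_num) (by norm_num)).mul_left _
      · have h := summable_pow_mul_geometric_of_norm_lt_one (R := ℝ) 1
          (r := (1/3:ℝ)) (by rw [norm_eq_abs, abs_lt]; constructor <;> norm_num)
        simpa [pow_one] using h.mul_left (Real.log 3)
    apply Summable.of_nonneg_of_le hfnn _ hg
    intro j
    have hlogc : 0 ≤ Real.log c := Real.log_nonneg hc
    have hlogp : 0 ≤ Real.log p := Real.log_nonneg (by linarith)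
    have hlog3 : 0 ≤ Real.log 3 := Real.log_nonneg (by norm_num)
    have hnum : 0 ≤ Real.log c + (j:ℝ) * Real.log 3 + Real.log p := by positivity
    have h1 : Real.log (c * 3^j * p) = Real.log c + (j:ℝ) * Real.log 3 + Real.log p := by
      rw [hlogsplit j, Real.log_mul (by positivity) hp0.ne', Real.log_pow]
      push_cast; ring
    have hle : ((3:ℝ)^j * p)⁻¹ ≤ (1/3:ℝ)^j := by
      rw [one_div, inv_pow]
      apply inv_anti₀ (by positivity)
      nlinarith [pow_pos h3 j]
    calc f j = (Real.log c + (j:ℝ) * Real.log 3 + Real.log p) * ((3:ℝ)^j * p)⁻¹ := by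
          rw [hf]; simp only [div_eq_mul_inv, h1]
      _ ≤ (Real.log c + (j:ℝ) * Real.log 3 + Real.log p) * (1/3:ℝ)^j :=
          mul_le_mul_of_nonneg_left hle hnum
      _ = (Real.log c + Real.log p) * (1/3:ℝ)^j + Real.log 3 * ((j:ℝ) * (1/3:ℝ)^j) := by
          ring
  have hstep : ∀ k, Real.log (b (k+1)) ≤ Real.log (b k) + f k := by
    intro k
    have e := he k
    have hbk : (0:ℝ) < b k := by linarith [hb k]
    have hbk1 : (0:ℝ) < b (k+1) := by linarith [hb (k+1)]
    have h1 : Real.log (b (k+1) ^ ((3:ℝ)^k * p))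
        ≤ Real.log (c * ((3:ℝ)^k * p) * b k ^ ((3:ℝ)^k * p)) :=
      Real.log_le_log (Real.rpow_pos_of_pos hbk1 _) (hrec k)
    rw [Real.log_rpow hbk1,
        Real.log_mul (by positivity) (Real.rpow_pos_of_pos hbk _).ne',
        Real.log_mul hc0.ne' e.ne', Real.log_rpow hbk] at h1
    have h2 : Real.log (b (k+1)) ≤
        (Real.log c + Real.log ((3:ℝ)^k * p) + ((3:ℝ)^k * p) * Real.log (b k))
          / ((3:ℝ)^k * p) := by
      rw [le_div_iff₀ e, mul_comm]
      linarith
    calc Real.log (b (k+1)) ≤ _ := h2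
      _ = Real.log (b k) + (Real.log c + Real.log ((3:ℝ)^k * p)) / ((3:ℝ)^k * p) := by
          field_simp; ring
      _ = Real.log (b k) + f k := by rw [hf]; simp only [hlogsplit k]
  have hpartial : ∀ k, Real.log (b k) ≤ Real.log (b 0) + ∑ j ∈ Finset.range k, f j := by
    intro k
    induction k with
    | zero => simp
    | succ n ih =>
      rw [Finset.sum_range_succ]
      linarith [hstep n]
  have hmain : ∀ k, Real.log (b k) ≤ Real.log (b 0) + ∑' j, f j := by
    intro k
    have ht := Summable.sum_le_tsum (Finset.range k) (fun j _ => hfnn j) hsum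
    linarith [hpartial k]
  refine ⟨hsum, hmain, Real.exp (Real.log (b 0) + ∑' j, f j), ?_⟩
  intro k
  have hbk : (0:ℝ) < b k := by linarith [hb k]
  calc b k = Real.exp (Real.log (b k)) := (Real.exp_log hbk).symm
    _ ≤ _ := Real.exp_le_exp.mpr (hmain k)
end
end
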